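/- There is a k-algebra isomorphism from O_q(N⁺) onto O_q(N⁺)′ sending y_{ij} = X_{ii}⁻¹X_{ij} to z_{ij} = X_{ij}X_{jj}⁻¹ for all 1 ≤ i < j ≤ n+1. -/

import Mathlib

open scoped TensorProduct

noncomputable section

namespace QSL

/-- The generator `X i j` of the free algebra underlying `O_q(SL_{n+1})`. -/
def Xf (k : Type) [Field k] (n : ℕ) (i j : Fin (n+1)) :
    FreeAlgebra k (Fin (n+1) × Fin (n+1)) :=
  FreeAlgebra.ι k (i, j)

/-- The number of inversions (the length `ℓ(σ)`) of a permutation. -/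
def invCount {m : ℕ} (σ : Equiv.Perm (Fin m)) : ℕ :=
  (Finset.univ.filter (fun p : Fin m × Fin m => p.1 < p.2 ∧ σ p.2 < σ p.1)).card

/-- The quantum determinant `∑_σ (-q)^{ℓ(σ)} X_{1σ(1)} ⋯ X_{n+1,σ(n+1)}`. -/
def qdet (k : Type) [Field k] (q : k) (n : ℕ) : FreeAlgebra k (Fin (n+1) × Fin (n+1)) :=
  ∑ σ : Equiv.Perm (Fin (n+1)),
    ((-q) ^ invCount σ) • (List.ofFn fun i => Xf k n i (σ i)).prod

/-- Defining relations of `O_q(SL_{n+1})`. -/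
inductive SLRel (k : Type) [Field k] (q : k) (n : ℕ) :
    FreeAlgebra k (Fin (n+1) × Fin (n+1)) → FreeAlgebra k (Fin (n+1) × Fin (n+1)) → Prop
  | row {i j m : Fin (n+1)} (h : j < m) :
      SLRel k q n (Xf k n i j * Xf k n i m) (q • (Xf k n i m * Xf k n i j))
  | col {i l j : Fin (n+1)} (h : i < l) :
      SLRel k q n (Xf k n i j * Xf k n l j) (q • (Xf k n l j * Xf k n i j))
  | swap {i l j m : Fin (n+1)} (h1 : i < l) (h2 : m < j) :
      SLRel k q n (Xf k n i j * Xf k n l m) (Xf k n l m * Xf k n i j)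
  | mixed {i l j m : Fin (n+1)} (h1 : i < l) (h2 : j < m) :
      SLRel k q n (Xf k n i j * Xf k n l m)
        (Xf k n l m * Xf k n i j + (q - q⁻¹) • (Xf k n i m * Xf k n l j))
  | det : SLRel k q n (qdet k q n) 1

/-- The quantized coordinate ring `O_q(SL_{n+1})`. -/
abbrev OqSL (k : Type) [Field k] (q : k) (n : ℕ) := RingQuot (SLRel k q n)

/-- The generator `X i j` of `O_q(SL_{n+1})`. -/
def XSL (k : Type) [Field k] (q : k) (n : ℕ) (i j : Fin (n+1)) : OqSL k q n :=
  RingQuot.mkAlgHom k (SLRel k q n) (Xf k n i j)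

/-- Relations `X i j = 0` for `i > j`, defining `O_q(B⁺)`. -/
inductive BpRel (k : Type) [Field k] (q : k) (n : ℕ) : OqSL k q n → OqSL k q n → Prop
  | zero {i j : Fin (n+1)} (h : j < i) : BpRel k q n (XSL k q n i j) 0

/-- Relations `X i j = 0` for `i < j`, defining `O_q(B⁻)`. -/
inductive BmRel (k : Type) [Field k] (q : k) (n : ℕ) : OqSL k q n → OqSL k q n → Prop
  | zero {i j : Fin (n+1)} (h : i < j) : BmRel k q n (XSL k q n i j) 0

/-- Relations `X i j = 0` for `i ≠ j`, defining `O_q(T)`. -/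
inductive TRel (k : Type) [Field k] (q : k) (n : ℕ) : OqSL k q n → OqSL k q n → Prop
  | zero {i j : Fin (n+1)} (h : i ≠ j) : TRel k q n (XSL k q n i j) 0

/-- The quantized coordinate ring `O_q(B⁺)` of the positive Borel. -/
abbrev OqBp (k : Type) [Field k] (q : k) (n : ℕ) := RingQuot (BpRel k q n)

/-- The quantized coordinate ring `O_q(B⁻)` of the negative Borel. -/
abbrev OqBm (k : Type) [Field k] (q : k) (n : ℕ) := RingQuot (BmRel k q n)

/-- The quantized coordinate ring `O_q(T)` of the maximal torus. -/
abbrev OqT (k : Type) [Field k] (q : k) (n : ℕ) := RingQuot (TRel k q n)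

/-- The coset of `X i j` in `O_q(B⁺)`. -/
def XBp (k : Type) [Field k] (q : k) (n : ℕ) (i j : Fin (n+1)) : OqBp k q n :=
  RingQuot.mkAlgHom k (BpRel k q n) (XSL k q n i j)

/-- The coset of `X i j` in `O_q(B⁻)`. -/
def XBm (k : Type) [Field k] (q : k) (n : ℕ) (i j : Fin (n+1)) : OqBm k q n :=
  RingQuot.mkAlgHom k (BmRel k q n) (XSL k q n i j)

/-- The coset `Y i i` of `X i i` in `O_q(T)`. -/
def YT (k : Type) [Field k] (q : k) (n : ℕ) (i : Fin (n+1)) : OqT k q n :=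
  RingQuot.mkAlgHom k (TRel k q n) (XSL k q n i i)

/-- `y i j = X_{ii}⁻¹ X_{ij}` in `O_q(B⁺)`. -/
def yY (k : Type) [Field k] (q : k) (n : ℕ) (i j : Fin (n+1)) : OqBp k q n :=
  Ring.inverse (XBp k q n i i) * XBp k q n i j

/-- `z i j = X_{ij} X_{jj}⁻¹` in `O_q(B⁺)`. -/
def zZ (k : Type) [Field k] (q : k) (n : ℕ) (i j : Fin (n+1)) : OqBp k q n :=
  XBp k q n i j * Ring.inverse (XBp k q n j j)

/-- The subalgebra `O_q(N⁺)` of `O_q(B⁺)`, generated by the `X_{ii}⁻¹X_{ij}`, `i < j`. -/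
def OqNp (k : Type) [Field k] (q : k) (n : ℕ) : Subalgebra k (OqBp k q n) :=
  Algebra.adjoin k {a | ∃ i j : Fin (n+1), i < j ∧ a = yY k q n i j}

/-- The subalgebra `O_q(N⁺)'` of `O_q(B⁺)`, generated by the `X_{ij}X_{jj}⁻¹`, `i < j`. -/
def OqNp' (k : Type) [Field k] (q : k) (n : ℕ) : Subalgebra k (OqBp k q n) :=
  Algebra.adjoin k {a | ∃ i j : Fin (n+1), i < j ∧ a = zZ k q n i j}

/-- `X_{jj}⁻¹ X_{ji}` in `O_q(B⁻)` (for `i < j`). -/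
def yNm (k : Type) [Field k] (q : k) (n : ℕ) (i j : Fin (n+1)) : OqBm k q n :=
  Ring.inverse (XBm k q n j j) * XBm k q n j i

/-- `X_{ji} X_{ii}⁻¹` in `O_q(B⁻)` (for `i < j`). -/
def zNm (k : Type) [Field k] (q : k) (n : ℕ) (i j : Fin (n+1)) : OqBm k q n :=
  XBm k q n j i * Ring.inverse (XBm k q n i i)

/-- The subalgebra `O_q(N⁻)` of `O_q(B⁻)`, generated by the `X_{jj}⁻¹X_{ji}`, `i < j`. -/
def OqNm (k : Type) [Field k] (q : k) (n : ℕ) : Subalgebra k (OqBm k q n) :=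
  Algebra.adjoin k {a | ∃ i j : Fin (n+1), i < j ∧ a = yNm k q n i j}

/-- The subalgebra `O_q(N⁻)'` of `O_q(B⁻)`, generated by the `X_{ji}X_{ii}⁻¹`, `i < j`. -/
def OqNm' (k : Type) [Field k] (q : k) (n : ℕ) : Subalgebra k (OqBm k q n) :=
  Algebra.adjoin k {a | ∃ i j : Fin (n+1), i < j ∧ a = zNm k q n i j}

end QSL


/-!
The assignment `X_ij ↦ X_ii X_ij X_jj⁻¹` extends to an algebra automorphism of `O_q(B⁺)`.
In `O_q(B⁺)` the quantum determinant collapses to `X_11 ⋯ X_{n+1,n+1} = 1`, and the diagonal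
generators commute, so they are units. Conjugation by `X_ll` rescales `X_pr` by
`q ^ (δ_lr - δ_lp)`, hence the image of a product `X_ij X_lm` is `q ^ (δ_jm - δ_il)` times
`X_ii X_ll (X_ij X_lm) (X_jj X_mm)⁻¹`; all monomials of a defining relation share the indices
`{i, l}` and `{j, m}` (and the scalar), so every relation is preserved. The same works with
`X_ll⁻¹` and `q⁻¹`, which gives the inverse map. The automorphism fixes the `X_ii`, so it sends
`X_ii⁻¹ X_ij` to `X_ij X_jj⁻¹` and maps `O_q(N⁺)` onto `O_q(N⁺)'`.
-/

theorem List.isUnit_of_mem_of_isUnit_prod {M : Type*} [Monoid M] :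
    ∀ {L : List M}, L.Pairwise Commute → IsUnit L.prod → ∀ a ∈ L, IsUnit a
  | [], _, _, _, ha => absurd ha List.not_mem_nil
  | b :: L, hp, hu, a, ha => by
    rw [List.pairwise_cons] at hp
    rw [List.prod_cons, (Commute.list_prod_right _ _ hp.1).isUnit_mul_iff] at hu
    rcases List.mem_cons.mp ha with rfl | ha
    · exact hu.1
    · exact List.isUnit_of_mem_of_isUnit_prod hp.2 hu.2 a ha

theorem Equiv.Perm.exists_apply_lt_of_ne_one {m : ℕ} {σ : Equiv.Perm (Fin m)} (hσ : σ ≠ 1) :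
    ∃ i, σ i < i := by
  by_contra! hle
  refine hσ (Equiv.ext fun i => Fin.ext ?_)
  have hsum : ∑ i : Fin m, (i : ℕ) = ∑ i, (σ i : ℕ) := (Equiv.sum_comp σ (fun i => (i : ℕ))).symm
  have := (Finset.sum_eq_sum_iff_of_le fun i _ => Fin.le_iff_val_le_val.mp (hle i)).mp hsum i
    (Finset.mem_univ i)
  simpa using this.symm

theorem Units.inv_mul_eq_smul_mul_inv {R A : Type*} [CommSemiring R] [Semiring A] [Algebra R A]
    (u : Aˣ) {x : A} {c : R} (h : x * u = c • (u * x)) : ↑u⁻¹ * x = c • (x * ↑u⁻¹) :=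
  calc ↑u⁻¹ * x = ↑u⁻¹ * (x * u) * ↑u⁻¹ := by simp [mul_assoc]
    _ = c • (x * ↑u⁻¹) := by
      rw [h, mul_smul_comm, smul_mul_assoc, ← mul_assoc, Units.inv_mul, one_mul]

namespace QSL

variable {k : Type} [Field k] {q : k} {n : ℕ}

theorem invCount_one {m : ℕ} : invCount (1 : Equiv.Perm (Fin m)) = 0 := by
  rw [invCount, Finset.card_eq_zero, Finset.filter_eq_empty_iff]
  exact fun p _ h => lt_asymm h.1 h.2

theorem map_qdet_of_lower_eq_zero {A : Type*} [Semiring A] [Algebra k A]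
    (f : FreeAlgebra k (Fin (n+1) × Fin (n+1)) →ₐ[k] A)
    (hf : ∀ i j, j < i → f (Xf k n i j) = 0) :
    f (qdet k q n) = (List.ofFn fun i => f (Xf k n i i)).prod := by
  simp only [qdet, map_sum, map_smul, map_list_prod, List.map_ofFn, Function.comp_def]
  rw [Finset.sum_eq_single_of_mem 1 (Finset.mem_univ _)]
  · simp [invCount_one]
  · intro σ _ hσ
    obtain ⟨i, hi⟩ := Equiv.Perm.exists_apply_lt_of_ne_one hσ
    rw [List.prod_eq_zero (List.mem_ofFn.mpr ⟨i, hf _ _ hi⟩), smul_zero]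

variable (k q n) in
def toBp : FreeAlgebra k (Fin (n+1) × Fin (n+1)) →ₐ[k] OqBp k q n :=
  (RingQuot.mkAlgHom k (BpRel k q n)).comp (RingQuot.mkAlgHom k (SLRel k q n))

theorem toBp_Xf (i j : Fin (n+1)) : toBp k q n (Xf k n i j) = XBp k q n i j := rfl

theorem toBp_rel {x y} (h : SLRel k q n x y) : toBp k q n x = toBp k q n y :=
  congrArg (RingQuot.mkAlgHom k (BpRel k q n)) (RingQuot.mkAlgHom_rel k h)

theorem algHom_ext_XBp {A : Type*} [Semiring A] [Algebra k A] {f g : OqBp k q n →ₐ[k] A}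
    (h : ∀ i j, f (XBp k q n i j) = g (XBp k q n i j)) : f = g :=
  RingQuot.ringQuot_ext' _ _ _ <| RingQuot.ringQuot_ext' _ _ _ <| FreeAlgebra.hom_ext <|
    funext fun p => h p.1 p.2

theorem XBp_row (i : Fin (n+1)) {j m : Fin (n+1)} (h : j < m) :
    XBp k q n i j * XBp k q n i m = q • (XBp k q n i m * XBp k q n i j) := by
  simpa only [map_mul, map_smul, toBp_Xf] using toBp_rel (SLRel.row (i := i) h)

theorem XBp_col {i l : Fin (n+1)} (j : Fin (n+1)) (h : i < l) :
    XBp k q n i j * XBp k q n l j = q • (XBp k q n l j * XBp k q n i j) := by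
  simpa only [map_mul, map_smul, toBp_Xf] using toBp_rel (SLRel.col (j := j) h)

theorem XBp_swap {i l j m : Fin (n+1)} (h1 : i < l) (h2 : m < j) :
    XBp k q n i j * XBp k q n l m = XBp k q n l m * XBp k q n i j := by
  simpa only [map_mul, toBp_Xf] using toBp_rel (SLRel.swap (q := q) h1 h2)

theorem XBp_mixed {i l j m : Fin (n+1)} (h1 : i < l) (h2 : j < m) :
    XBp k q n i j * XBp k q n l m =
      XBp k q n l m * XBp k q n i j + (q - q⁻¹) • (XBp k q n i m * XBp k q n l j) := by
  simpa only [map_mul, map_add, map_smul, toBp_Xf] using toBp_rel (SLRel.mixed h1 h2)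

theorem XBp_of_lt {i j : Fin (n+1)} (h : j < i) : XBp k q n i j = 0 := by
  simpa only [map_zero, XBp] using RingQuot.mkAlgHom_rel k (BpRel.zero (k := k) (q := q) h)

theorem prod_XBp_diag : (List.ofFn fun i => XBp k q n i i).prod = 1 := by
  have h := toBp_rel (SLRel.det (k := k) (q := q) (n := n))
  rwa [map_qdet_of_lower_eq_zero (toBp k q n) fun i j hij => XBp_of_lt hij, map_one] at h

theorem commute_XBp_diag (i j : Fin (n+1)) : Commute (XBp k q n i i) (XBp k q n j j) := by
  rcases lt_trichotomy i j with h | rfl | h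
  · simpa [commute_iff_eq, XBp_of_lt h] using XBp_mixed (q := q) h h
  · exact Commute.refl _
  · simpa [commute_iff_eq, XBp_of_lt h] using (XBp_mixed (q := q) h h).symm

theorem isUnit_XBp_diag (i : Fin (n+1)) : IsUnit (XBp k q n i i) :=
  List.isUnit_of_mem_of_isUnit_prod (List.pairwise_ofFn.mpr fun a b _ => commute_XBp_diag a b)
    (prod_XBp_diag (q := q) ▸ isUnit_one) _ (List.mem_ofFn.mpr ⟨i, rfl⟩)

variable (k q n) in
def diagUnit (i : Fin (n+1)) : (OqBp k q n)ˣ := (isUnit_XBp_diag i).unit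

theorem coe_diagUnit (i : Fin (n+1)) : (diagUnit k q n i : OqBp k q n) = XBp k q n i i :=
  (isUnit_XBp_diag i).unit_spec

theorem commute_diagUnit (a b : Fin (n+1)) : Commute (diagUnit k q n a) (diagUnit k q n b) :=
  Units.ext <| by simpa only [Units.val_mul, coe_diagUnit] using (commute_XBp_diag a b).eq

def delta {m : ℕ} (a b : Fin m) : ℤ := if a = b then 1 else 0

theorem delta_comm {m : ℕ} (a b : Fin m) : delta a b = delta b a := by
  simp [delta, eq_comm]

theorem XBp_mul_XBp_diag (hq0 : q ≠ 0) (p r l : Fin (n+1)) :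
    XBp k q n p r * XBp k q n l l =
      q ^ (delta l r - delta l p) • (XBp k q n l l * XBp k q n p r) := by
  rcases lt_trichotomy r p with hrp | rfl | hpr
  · simp [XBp_of_lt hrp]
  · simpa using (commute_XBp_diag r l).eq
  rcases eq_or_ne l p with rfl | hlp
  · rw [XBp_row l hpr, smul_smul]
    simp [delta, hpr.ne, hq0]
  rcases eq_or_ne l r with rfl | hlr
  · simpa [delta, hlp] using XBp_col l hpr
  simp only [delta, if_neg hlp, if_neg hlr, sub_self, zpow_zero, one_smul]
  rcases lt_or_gt_of_ne hlp with hl | hl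
  · simpa [XBp_of_lt hl] using (XBp_mixed (q := q) hl (hl.trans hpr)).symm
  rcases lt_or_gt_of_ne hlr with hl' | hl'
  · exact XBp_swap hl hl'
  · simpa [XBp_of_lt hl'] using XBp_mixed (q := q) hl hl'

/-- `t l` is to be thought of as `X_ll ^ s` and `μ` as `q ^ s`, for `s = ±1`. -/
structure IsDiagonalTwist (t : Fin (n+1) → (OqBp k q n)ˣ) (μ : k) : Prop where
  ne_zero : μ ≠ 0
  commute : ∀ a b, Commute (t a) (t b)
  XBp_mul : ∀ p r l,
    XBp k q n p r * t l = μ ^ (delta l r - delta l p) • (↑(t l) * XBp k q n p r)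

theorem isDiagonalTwist_diagUnit (hq0 : q ≠ 0) : IsDiagonalTwist (diagUnit k q n) q :=
  ⟨hq0, commute_diagUnit, fun p r l => by
    simpa only [coe_diagUnit] using XBp_mul_XBp_diag hq0 p r l⟩

section Twist

variable (t : Fin (n+1) → (OqBp k q n)ˣ)

def twistGen (i j : Fin (n+1)) : OqBp k q n := ↑(t i) * XBp k q n i j * ↑((t j)⁻¹)

theorem twistGen_of_lt {i j : Fin (n+1)} (h : j < i) : twistGen t i j = 0 := by
  rw [twistGen, XBp_of_lt h, mul_zero, zero_mul]

def twistFree : FreeAlgebra k (Fin (n+1) × Fin (n+1)) →ₐ[k] OqBp k q n :=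
  FreeAlgebra.lift k fun p => twistGen t p.1 p.2

theorem twistFree_Xf (i j : Fin (n+1)) : twistFree t (Xf k n i j) = twistGen t i j :=
  FreeAlgebra.lift_ι_apply _ _

end Twist

namespace IsDiagonalTwist

variable {t : Fin (n+1) → (OqBp k q n)ˣ} {μ : k}

theorem inv_mul_XBp (ht : IsDiagonalTwist t μ) (p r l : Fin (n+1)) :
    ↑((t l)⁻¹) * XBp k q n p r = μ ^ (delta l r - delta l p) • (XBp k q n p r * ↑((t l)⁻¹)) :=
  Units.inv_mul_eq_smul_mul_inv _ (ht.XBp_mul p r l)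

theorem inv (ht : IsDiagonalTwist t μ) : IsDiagonalTwist t⁻¹ μ⁻¹ where
  ne_zero := inv_ne_zero ht.ne_zero
  commute a b := (ht.commute a b).inv_inv
  XBp_mul p r l := by
    rw [Pi.inv_apply, inv_zpow, ht.inv_mul_XBp, smul_smul,
      inv_mul_cancel₀ (zpow_ne_zero _ ht.ne_zero), one_smul]

theorem twistGen_mul (ht : IsDiagonalTwist t μ) (i j l m : Fin (n+1)) :
    twistGen t i j * twistGen t l m = μ ^ (delta j m - delta i l) •
      (↑(t i * t l) * (XBp k q n i j * XBp k q n l m) * ↑((t j * t m)⁻¹)) := by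
  have hjl : (↑((t j)⁻¹) : OqBp k q n) * ↑(t l) = ↑(t l) * ↑((t j)⁻¹) := by
    simp only [← Units.val_mul, ((ht.commute j l).inv_left).eq]
  calc twistGen t i j * twistGen t l m
      = ↑(t i) * (XBp k q n i j * ↑(t l)) * (↑((t j)⁻¹) * XBp k q n l m) * ↑((t m)⁻¹) := by
        simp only [twistGen, mul_assoc]
        rw [← mul_assoc (↑((t j)⁻¹) : OqBp k q n), hjl, mul_assoc]
    _ = (μ ^ (delta j m - delta j l) * μ ^ (delta l j - delta l i)) •
          (↑(t i * t l) * (XBp k q n i j * XBp k q n l m) * ↑((t j)⁻¹ * (t m)⁻¹)) := by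
        rw [ht.XBp_mul, ht.inv_mul_XBp]
        simp only [smul_mul_assoc, mul_smul_comm, smul_smul, Units.val_mul, mul_assoc]
    _ = _ := by
        rw [← zpow_add₀ ht.ne_zero, mul_inv_rev, ((ht.commute m j).inv_inv).eq, delta_comm l j,
          delta_comm l i]
        ring_nf

theorem twistGen_row (ht : IsDiagonalTwist t μ) (i : Fin (n+1)) {j m : Fin (n+1)} (h : j < m) :
    twistGen t i j * twistGen t i m = q • (twistGen t i m * twistGen t i j) := by
  rw [ht.twistGen_mul, ht.twistGen_mul, XBp_row i h, (ht.commute m j).eq, delta_comm m j,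
    mul_smul_comm, smul_mul_assoc, smul_comm]

theorem twistGen_col (ht : IsDiagonalTwist t μ) {i l : Fin (n+1)} (j : Fin (n+1)) (h : i < l) :
    twistGen t i j * twistGen t l j = q • (twistGen t l j * twistGen t i j) := by
  rw [ht.twistGen_mul, ht.twistGen_mul, XBp_col j h, (ht.commute l i).eq, delta_comm l i,
    mul_smul_comm, smul_mul_assoc, smul_comm]

theorem twistGen_swap (ht : IsDiagonalTwist t μ) {i l j m : Fin (n+1)} (h1 : i < l)
    (h2 : m < j) : twistGen t i j * twistGen t l m = twistGen t l m * twistGen t i j := by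
  rw [ht.twistGen_mul, ht.twistGen_mul, XBp_swap h1 h2, (ht.commute l i).eq, (ht.commute m j).eq,
    delta_comm m j, delta_comm l i]

theorem twistGen_mixed (ht : IsDiagonalTwist t μ) {i l j m : Fin (n+1)} (h1 : i < l)
    (h2 : j < m) : twistGen t i j * twistGen t l m =
      twistGen t l m * twistGen t i j + (q - q⁻¹) • (twistGen t i m * twistGen t l j) := by
  rw [ht.twistGen_mul, ht.twistGen_mul, ht.twistGen_mul, XBp_mixed h1 h2, (ht.commute l i).eq,
    (ht.commute m j).eq, delta_comm m j, delta_comm l i]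
  simp only [mul_add, add_mul, smul_add, mul_smul_comm, smul_mul_assoc, smul_comm (q - q⁻¹)]

theorem twistGen_diag (ht : IsDiagonalTwist t μ) (i : Fin (n+1)) :
    twistGen t i i = XBp k q n i i := by
  have h := ht.XBp_mul i i i
  rw [sub_self, zpow_zero, one_smul] at h
  rw [twistGen, ← h, mul_assoc, Units.mul_inv, mul_one]

theorem twistFree_rel (ht : IsDiagonalTwist t μ) ⦃x y⦄ (h : SLRel k q n x y) :
    twistFree t x = twistFree t y := by
  induction h with
  | row h => simpa only [map_mul, map_smul, twistFree_Xf] using ht.twistGen_row _ h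
  | col h => simpa only [map_mul, map_smul, twistFree_Xf] using ht.twistGen_col _ h
  | swap h1 h2 => simpa only [map_mul, twistFree_Xf] using ht.twistGen_swap h1 h2
  | mixed h1 h2 =>
    simpa only [map_mul, map_add, map_smul, twistFree_Xf] using ht.twistGen_mixed h1 h2
  | det =>
    rw [map_one, map_qdet_of_lower_eq_zero _ fun i j h => by
      rw [twistFree_Xf, twistGen_of_lt t h]]
    simpa only [twistFree_Xf, ht.twistGen_diag] using prod_XBp_diag (q := q)

end IsDiagonalTwist

variable {t : Fin (n+1) → (OqBp k q n)ˣ} {μ : k}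

def twist (ht : IsDiagonalTwist t μ) : OqBp k q n →ₐ[k] OqBp k q n :=
  RingQuot.liftAlgHom k ⟨RingQuot.liftAlgHom k ⟨twistFree t, ht.twistFree_rel⟩, by
    rintro _ _ ⟨h⟩
    rw [XSL, RingQuot.liftAlgHom_mkAlgHom_apply, twistFree_Xf, twistGen_of_lt t h, map_zero]⟩

theorem twist_XBp (ht : IsDiagonalTwist t μ) (i j : Fin (n+1)) :
    twist ht (XBp k q n i j) = twistGen t i j := by
  rw [twist, XBp, RingQuot.liftAlgHom_mkAlgHom_apply, XSL, RingQuot.liftAlgHom_mkAlgHom_apply,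
    twistFree_Xf]

theorem twist_diagUnit (ht : IsDiagonalTwist t μ) (i : Fin (n+1)) :
    twist ht (diagUnit k q n i) = diagUnit k q n i := by
  rw [coe_diagUnit, twist_XBp, ht.twistGen_diag]

theorem twist_diagUnit_inv (ht : IsDiagonalTwist t μ) (i : Fin (n+1)) :
    twist ht ↑((diagUnit k q n i)⁻¹) = ↑((diagUnit k q n i)⁻¹) := by
  have h := congrArg (twist ht) (Units.inv_mul (diagUnit k q n i))
  rw [map_mul, map_one, twist_diagUnit] at h
  exact (Units.inv_eq_of_mul_eq_one_left h).symm

theorem twist_inv_comp_twist (hq0 : q ≠ 0) :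
    (twist (isDiagonalTwist_diagUnit (n := n) hq0).inv).comp
      (twist (isDiagonalTwist_diagUnit hq0)) = AlgHom.id k _ :=
  algHom_ext_XBp fun i j => by
    simp only [AlgHom.comp_apply, twist_XBp, twistGen, map_mul, twist_diagUnit, twist_diagUnit_inv,
      Pi.inv_apply, inv_inv, mul_assoc, Units.mul_inv_cancel_left, Units.mul_inv, mul_one,
      AlgHom.id_apply]

theorem twist_comp_twist_inv (hq0 : q ≠ 0) :
    (twist (isDiagonalTwist_diagUnit (n := n) hq0)).comp
      (twist (isDiagonalTwist_diagUnit hq0).inv) = AlgHom.id k _ :=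
  algHom_ext_XBp fun i j => by
    simp only [AlgHom.comp_apply, twist_XBp, twistGen, map_mul, twist_diagUnit, twist_diagUnit_inv,
      Pi.inv_apply, inv_inv, mul_assoc, Units.inv_mul_cancel_left, Units.inv_mul, mul_one,
      AlgHom.id_apply]

variable (k q n) in
def twistEquiv (hq0 : q ≠ 0) : OqBp k q n ≃ₐ[k] OqBp k q n :=
  AlgEquiv.ofAlgHom _ _ (twist_comp_twist_inv hq0) (twist_inv_comp_twist hq0)

theorem twistEquiv_yY (hq0 : q ≠ 0) (i j : Fin (n+1)) :
    twistEquiv k q n hq0 (yY k q n i j) = zZ k q n i j := by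
  rw [yY, zZ, ← coe_diagUnit (q := q) i, ← coe_diagUnit (q := q) j, Ring.inverse_unit,
    Ring.inverse_unit]
  simp only [twistEquiv, AlgEquiv.ofAlgHom_apply, map_mul, twist_diagUnit_inv, twist_XBp,
    twistGen, mul_assoc, Units.inv_mul_cancel_left]

end QSL

open QSL in
theorem OqNp_iso_OqNp'_general (k : Type) [Field k] (q : k) (hq0 : q ≠ 0) (n : ℕ) :
    ∃ e : OqNp k q n ≃ₐ[k] OqNp' k q n,
      ∀ (i j : Fin (n+1)) (h : i < j),
        (e ⟨yY k q n i j, Algebra.subset_adjoin ⟨i, j, h, rfl⟩⟩ : OqBp k q n) =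
          zZ k q n i j := by
  set e := twistEquiv k q n hq0
  have hmap : (OqNp k q n).map (e : OqBp k q n →ₐ[k] OqBp k q n) = OqNp' k q n := by
    rw [OqNp, OqNp', AlgHom.map_adjoin]
    congr 1
    ext x
    constructor
    · rintro ⟨_, ⟨i, j, hij, rfl⟩, rfl⟩
      exact ⟨i, j, hij, twistEquiv_yY hq0 i j⟩
    · rintro ⟨i, j, hij, rfl⟩
      exact ⟨yY k q n i j, ⟨i, j, hij, rfl⟩, twistEquiv_yY hq0 i j⟩
  exact ⟨(e.subalgebraMap _).trans (Subalgebra.equivOfEq _ _ hmap),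
    fun i j _ => twistEquiv_yY hq0 i j⟩

open QSL in
/-- There is a `k`-algebra isomorphism of `O_q(N⁺)` onto `O_q(N⁺)'` sending
`y i j = X_{ii}⁻¹X_{ij}` to `z i j = X_{ij}X_{jj}⁻¹` for all `i < j`. -/
theorem OqNp_iso_OqNp' (k : Type) [Field k] (q : k) (hq0 : q ≠ 0)
    (hq : ∀ m : ℕ, 0 < m → q ^ m ≠ 1) (n : ℕ) (hn : 1 ≤ n) :
    ∃ e : OqNp k q n ≃ₐ[k] OqNp' k q n,
      ∀ (i j : Fin (n+1)) (h : i < j),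
        (e ⟨yY k q n i j, Algebra.subset_adjoin ⟨i, j, h, rfl⟩⟩ : OqBp k q n) =
          zZ k q n i j :=
  OqNp_iso_OqNp'_general k q hq0 n
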